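/- With P, Q indeterminates and i₄ = (Q³+P³+1)/(PQ), i₇ = (PQ²+Q²−2PQ+P²Q+Q+P²+P)/(PQ), i₈ = −(P−1)²(Q−1)²(Q−P)²(P+Q+1)³/(P³Q³), the following syzygy holds identically: i₄·i₇² − i₇³ − 4i₄² + 4i₄·i₇ − 8i₄ + 12i₇ + i₈ − 20 = 0. -/
import Mathlib


set_option maxHeartbeats 2000000 in
/-- The fourth-order syzygy among the invariants of `x^n + y^n + z^n`:
`i₄i₇² − i₇³ − 4i₄² + 4i₄i₇ − 8i₄ + 12i₇ + i₈ − 20 = 0`. -/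
theorem stmt19 (P Q : ℂ) (hP : P ≠ 0) (hQ : Q ≠ 0) :
    let i₄ := (Q ^ 3 + P ^ 3 + 1) / (P * Q)
    let i₇ := (P * Q ^ 2 + Q ^ 2 - 2 * P * Q + P ^ 2 * Q + Q + P ^ 2 + P) / (P * Q)
    let i₈ := -((P - 1) ^ 2 * (Q - 1) ^ 2 * (Q - P) ^ 2 * (P + Q + 1) ^ 3) /
      (P ^ 3 * Q ^ 3)
    i₄ * i₇ ^ 2 - i₇ ^ 3 - 4 * i₄ ^ 2 + 4 * i₄ * i₇ - 8 * i₄ + 12 * i₇ + i₈ - 20 = 0 := by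
  dsimp only
  linear_combination
    ((12) * Q⁻¹ +
      (4) * Q⁻¹^2 +
      (4) * P⁻¹ * Q⁻¹^2 +
      (-24) * Q * Q⁻¹ +
      (4) * Q * Q⁻¹^2 +
      (-4) * Q * Q⁻¹^3 +
      (-8) * Q * P⁻¹ * Q⁻¹^2 +
      (-4) * Q * P⁻¹ * Q⁻¹^3 +
      (4) * Q * P⁻¹^2 * Q⁻¹^3 +
      (12) * Q^2 * Q⁻¹ +
      (-16) * Q^2 * Q⁻¹^3 +
      (4) * Q^2 * P⁻¹ * Q⁻¹^2 +
      (16) * Q^2 * P⁻¹ * Q⁻¹^3 +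
      (-4) * Q^2 * P⁻¹^2 * Q⁻¹^3 +
      (4) * Q^3 * Q⁻¹^2 +
      (44) * Q^3 * Q⁻¹^3 +
      (4) * Q^3 * P⁻¹ * Q⁻¹^2 +
      (-16) * Q^3 * P⁻¹ * Q⁻¹^3 +
      (-4) * Q^3 * P⁻¹^2 * Q⁻¹^3 +
      (4) * Q^4 * Q⁻¹^2 +
      (-16) * Q^4 * Q⁻¹^3 +
      (-8) * Q^4 * P⁻¹ * Q⁻¹^2 +
      (-16) * Q^4 * P⁻¹ * Q⁻¹^3 +
      (8) * Q^4 * P⁻¹^2 * Q⁻¹^3 +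
      (-4) * Q^5 * Q⁻¹^3 +
      (4) * Q^5 * P⁻¹ * Q⁻¹^2 +
      (16) * Q^5 * P⁻¹ * Q⁻¹^3 +
      (-4) * Q^5 * P⁻¹^2 * Q⁻¹^3 +
      (-4) * Q^6 * P⁻¹ * Q⁻¹^3 +
      (-4) * Q^6 * P⁻¹^2 * Q⁻¹^3 +
      (4) * Q^7 * P⁻¹^2 * Q⁻¹^3 +
      (12) * P * Q⁻¹ +
      (-8) * P * Q⁻¹^2 +
      (4) * P * P⁻¹ * Q⁻¹^2 +
      (12) * P * Q * Q⁻¹ +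
      (4) * P * Q * Q⁻¹^2 +
      (8) * P * Q * Q⁻¹^3 +
      (4) * P * Q * P⁻¹ * Q⁻¹^2 +
      (-4) * P * Q * P⁻¹ * Q⁻¹^3 +
      (-4) * P * Q * P⁻¹^2 * Q⁻¹^3 +
      (4) * P * Q^2 * Q⁻¹^2 +
      (-16) * P * Q^2 * Q⁻¹^3 +
      (-16) * P * Q^2 * P⁻¹ * Q⁻¹^3 +
      (16) * P * Q^2 * P⁻¹^2 * Q⁻¹^3 +
      (-8) * P * Q^3 * Q⁻¹^2 +
      (-16) * P * Q^3 * Q⁻¹^3 +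
      (4) * P * Q^3 * P⁻¹ * Q⁻¹^2 +
      (44) * P * Q^3 * P⁻¹ * Q⁻¹^3 +
      (-16) * P * Q^3 * P⁻¹^2 * Q⁻¹^3 +
      (8) * P * Q^4 * Q⁻¹^3 +
      (4) * P * Q^4 * P⁻¹ * Q⁻¹^2 +
      (-16) * P * Q^4 * P⁻¹ * Q⁻¹^3 +
      (-16) * P * Q^4 * P⁻¹^2 * Q⁻¹^3 +
      (-4) * P * Q^5 * P⁻¹ * Q⁻¹^3 +
      (16) * P * Q^5 * P⁻¹^2 * Q⁻¹^3 +
      (-4) * P * Q^6 * P⁻¹^2 * Q⁻¹^3 +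
      (-8) * P^2 * Q⁻¹ +
      (4) * P^2 * Q⁻¹^2 +
      (-8) * P^2 * P⁻¹ * Q⁻¹^2 +
      (-8) * P^2 * Q * Q⁻¹^2 +
      (-4) * P^2 * Q * Q⁻¹^3 +
      (4) * P^2 * Q * P⁻¹ * Q⁻¹^2 +
      (8) * P^2 * Q * P⁻¹ * Q⁻¹^3 +
      (-4) * P^2 * Q * P⁻¹^2 * Q⁻¹^3 +
      (4) * P^2 * Q^2 * Q⁻¹^2 +
      (16) * P^2 * Q^2 * Q⁻¹^3 +
      (4) * P^2 * Q^2 * P⁻¹ * Q⁻¹^2 +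
      (-16) * P^2 * Q^2 * P⁻¹ * Q⁻¹^3 +
      (-16) * P^2 * Q^2 * P⁻¹^2 * Q⁻¹^3 +
      (-4) * P^2 * Q^3 * Q⁻¹^3 +
      (-8) * P^2 * Q^3 * P⁻¹ * Q⁻¹^2 +
      (-16) * P^2 * Q^3 * P⁻¹ * Q⁻¹^3 +
      (44) * P^2 * Q^3 * P⁻¹^2 * Q⁻¹^3 +
      (8) * P^2 * Q^4 * P⁻¹ * Q⁻¹^3 +
      (-16) * P^2 * Q^4 * P⁻¹^2 * Q⁻¹^3 +
      (-4) * P^2 * Q^5 * P⁻¹^2 * Q⁻¹^3 +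
      (4) * P^3 * Q⁻¹^2 +
      (4) * P^3 * P⁻¹ * Q⁻¹^2 +
      (4) * P^3 * Q * Q⁻¹^2 +
      (-4) * P^3 * Q * Q⁻¹^3 +
      (-8) * P^3 * Q * P⁻¹ * Q⁻¹^2 +
      (-4) * P^3 * Q * P⁻¹ * Q⁻¹^3 +
      (8) * P^3 * Q * P⁻¹^2 * Q⁻¹^3 +
      (-4) * P^3 * Q^2 * Q⁻¹^3 +
      (4) * P^3 * Q^2 * P⁻¹ * Q⁻¹^2 +
      (16) * P^3 * Q^2 * P⁻¹ * Q⁻¹^3 +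
      (-16) * P^3 * Q^2 * P⁻¹^2 * Q⁻¹^3 +
      (-4) * P^3 * Q^3 * P⁻¹ * Q⁻¹^3 +
      (-16) * P^3 * Q^3 * P⁻¹^2 * Q⁻¹^3 +
      (8) * P^3 * Q^4 * P⁻¹^2 * Q⁻¹^3 +
      (-4) * P^4 * Q⁻¹^2 +
      (4) * P^4 * P⁻¹ * Q⁻¹^2 +
      (4) * P^4 * Q * Q⁻¹^3 +
      (4) * P^4 * Q * P⁻¹ * Q⁻¹^2 +
      (-4) * P^4 * Q * P⁻¹ * Q⁻¹^3 +
      (-4) * P^4 * Q * P⁻¹^2 * Q⁻¹^3 +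
      (-4) * P^4 * Q^2 * P⁻¹ * Q⁻¹^3 +
      (16) * P^4 * Q^2 * P⁻¹^2 * Q⁻¹^3 +
      (-4) * P^4 * Q^3 * P⁻¹^2 * Q⁻¹^3 +
      (-4) * P^5 * P⁻¹ * Q⁻¹^2 +
      (4) * P^5 * Q * P⁻¹ * Q⁻¹^3 +
      (-4) * P^5 * Q * P⁻¹^2 * Q⁻¹^3 +
      (-4) * P^5 * Q^2 * P⁻¹^2 * Q⁻¹^3 +
      (4) * P^6 * Q * P⁻¹^2 * Q⁻¹^3) * mul_inv_cancel₀ hP +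
    ((20) +
      (-12) * Q⁻¹ +
      (-4) * Q⁻¹^2 +
      (8) * P⁻¹ * Q⁻¹ +
      (-4) * P⁻¹ * Q⁻¹^2 +
      (4) * P⁻¹^2 * Q⁻¹^2 +
      (44) * Q * Q⁻¹ +
      (-16) * Q * Q⁻¹^2 +
      (-12) * Q * P⁻¹ * Q⁻¹ +
      (16) * Q * P⁻¹ * Q⁻¹^2 +
      (-4) * Q * P⁻¹^2 * Q⁻¹^2 +
      (-12) * Q^2 * Q⁻¹ +
      (44) * Q^2 * Q⁻¹^2 +
      (-12) * Q^2 * P⁻¹ * Q⁻¹ +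
      (-16) * Q^2 * P⁻¹ * Q⁻¹^2 +
      (-4) * Q^2 * P⁻¹^2 * Q⁻¹^2 +
      (-16) * Q^3 * Q⁻¹^2 +
      (8) * Q^3 * P⁻¹ * Q⁻¹ +
      (-16) * Q^3 * P⁻¹ * Q⁻¹^2 +
      (8) * Q^3 * P⁻¹^2 * Q⁻¹^2 +
      (-4) * Q^4 * Q⁻¹^2 +
      (16) * Q^4 * P⁻¹ * Q⁻¹^2 +
      (-4) * Q^4 * P⁻¹^2 * Q⁻¹^2 +
      (-4) * Q^5 * P⁻¹ * Q⁻¹^2 +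
      (-4) * Q^5 * P⁻¹^2 * Q⁻¹^2 +
      (4) * Q^6 * P⁻¹^2 * Q⁻¹^2 +
      (-12) * P * Q⁻¹ +
      (8) * P * Q⁻¹^2 +
      (-12) * P * Q * Q⁻¹ +
      (-16) * P * Q * Q⁻¹^2 +
      (-16) * P * Q^2 * Q⁻¹^2 +
      (8) * P * Q^3 * Q⁻¹^2 +
      (8) * P^2 * Q⁻¹ +
      (-4) * P^2 * Q⁻¹^2 +
      (16) * P^2 * Q * Q⁻¹^2 +
      (-4) * P^2 * Q^2 * Q⁻¹^2 +
      (-4) * P^3 * Q⁻¹^2 +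
      (-4) * P^3 * Q * Q⁻¹^2 +
      (4) * P^4 * Q⁻¹^2) * mul_inv_cancel₀ hQ
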